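/- arXiv:2002.08876 — 2 statements merged into one kernel-verified Lean document; each statement's English description precedes it below -/
import Mathlib

section
/- Stability of sliding deformations under small perturbations. Let X ⊂ ℝ^n be open, let Γ ⊂ X be a Lipschitz neighborhood retract of X, let E ⊂ X be closed (relative to X), and let f be a sliding deformation of E in an open set U ⊂ X. Let W be an open set with W ⋐ E ∩ U (there exists a compact K with W ⊂ K ⊂ E ∩ U). Then there exists δ > 0 such that every Lipschitz map g : E → ℝ^n satisfying |g − f| ≤ δ, g(E ∩ Γ) ⊂ Γ and g = id on E ∖ W is a sliding deformation of E in U. -/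
/-!
Let `L ⊆ E ∩ U` be a compact set off which both `f` and every admissible `g` are the identity,
and let `ρ` be the Lipschitz retraction onto `Γ`. After the homotopy of `f`, deform `f` into `g`
in three stages: switch on the correction `y ↦ y + χ y • (ρ y - y)`, where the cutoff `χ` equals
`1` near the compact set `f (Γ ∩ L)`; move straight from `f` to `g`; switch the correction off.
While the correction is fully on, points of `Γ` travel inside the region where `χ = 1`, so `ρ`
puts them back on `Γ`; during the switching stages they sit at `f x` or `g x`, already on `Γ`.
Points of `L` stay `O(δ)`-close to the compact set `f L ⊆ U`, the correction only acts `O(δ)`-close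
to it, and so every point that moves stays in `U` and lies in a compact subset of `E ∩ U`.
-/

open MeasureTheory Metric Set Filter
open scoped ENNReal NNReal Topology BigOperators

noncomputable section

namespace Paper

/-- Euclidean space ℝ^n. -/
abbrev Vn (n : ℕ) := EuclideanSpace ℝ (Fin n)

/-- The d-dimensional Hausdorff measure on ℝ^n. -/
abbrev HM (n d : ℕ) : Measure (Vn n) := Measure.hausdorffMeasure (d : ℝ)

/-- The scale radius `r_s(x)`; for `s = ∞` it equals the distance to the complement of `X`. -/
def scaleRadius {n : ℕ} (X : Set (Vn n)) (s : ℝ≥0∞) (x : Vn n) : ℝ≥0∞ :=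
  if s = ⊤ then EMetric.infEdist x Xᶜ
  else min (s / (1 + s) * EMetric.infEdist x Xᶜ) s

/-- Real version of the scale radius, for a finite scale `t`. -/
def scaleRadiusReal {n : ℕ} (X : Set (Vn n)) (t : ℝ) (x : Vn n) : ℝ :=
  (scaleRadius X (ENNReal.ofReal t) x).toReal

/-- `E` is relatively closed in `X`. -/
def RelClosedIn {n : ℕ} (X E : Set (Vn n)) : Prop :=
  ∃ C : Set (Vn n), IsClosed C ∧ E = C ∩ X

/-- `E` is `H^d` locally finite in `X`. -/
def HdLocallyFiniteOn (n d : ℕ) (X E : Set (Vn n)) : Prop :=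
  ∀ x ∈ X, ∃ r : ℝ, 0 < r ∧ HM n d (E ∩ ball x r) < ⊤

/-- The core `E^*` of `E` in `X`: the support of `H^d ⌞ E` in `X`. -/
def core (n d : ℕ) (X E : Set (Vn n)) : Set (Vn n) :=
  {x | x ∈ X ∧ ∀ r : ℝ, 0 < r → 0 < HM n d (E ∩ ball x r)}

/-- The support in `X` of a measure `μ`. -/
def suppIn {n : ℕ} (X : Set (Vn n)) (μ : Measure (Vn n)) : Set (Vn n) :=
  {x | x ∈ X ∧ ∀ r : ℝ, 0 < r → 0 < μ (ball x r)}

/-- A sliding deformation of `E` along the boundary `Γ` in the open set `U ⊆ X`. -/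
structure IsSlidingDeformation {n : ℕ} (X Γ E U : Set (Vn n)) (f : Vn n → Vn n) : Prop where
  lipschitz : ∃ K : ℝ≥0, LipschitzOnWith K f E
  mapsToX : ∀ x ∈ E, f x ∈ X
  homotopy : ∃ F : ℝ × Vn n → Vn n,
    ContinuousOn F (Set.Icc (0:ℝ) 1 ×ˢ E) ∧
    (∀ x ∈ E, F (0, x) = x) ∧
    (∀ x ∈ E, F (1, x) = f x) ∧
    (∀ t ∈ Set.Icc (0:ℝ) 1, ∀ x ∈ E, F (t, x) ∈ X) ∧
    (∀ t ∈ Set.Icc (0:ℝ) 1, ∀ x ∈ E ∩ Γ, F (t, x) ∈ Γ) ∧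
    (∀ t ∈ Set.Icc (0:ℝ) 1, ∀ x ∈ E ∩ U, F (t, x) ∈ U) ∧
    ∃ K : Set (Vn n), IsCompact K ∧ K ⊆ E ∩ U ∧
      ∀ t ∈ Set.Icc (0:ℝ) 1, ∀ x ∈ E \ K, F (t, x) = x

/-- A global sliding deformation in `U` is a sliding deformation of `X` itself. -/
def IsGlobalSlidingDeformation {n : ℕ} (X Γ U : Set (Vn n)) (f : Vn n → Vn n) : Prop :=
  IsSlidingDeformation X Γ X U f

/-- `E` is `(κ,h,s)`-quasiminimal with respect to the energy `I` along `Γ` in `X`. -/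
def Quasiminimal {n : ℕ} (I : Measure (Vn n)) (X Γ E : Set (Vn n))
    (κ h : ℝ) (s : ℝ≥0∞) : Prop :=
  ∀ (x : Vn n) (r : ℝ), 0 < r → ENNReal.ofReal r ≤ scaleRadius X s x → ball x r ⊆ X →
    ∀ f : Vn n → Vn n, IsSlidingDeformation X Γ E (ball x r) f →
      I {y | y ∈ E ∧ f y ≠ y} ≤
        ENNReal.ofReal κ * I (f '' {y | y ∈ E ∧ f y ≠ y}) +
        ENNReal.ofReal h * I (E ∩ ball x (h * r))

/-- Admissible energy in `X`, with comparability constant `Λ` (Definition of the paper). -/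
structure AdmissibleEnergyWith {n : ℕ} (d : ℕ) (X : Set (Vn n)) (I : Measure (Vn n))
    (Λ : ℝ) : Prop where
  one_le : 1 ≤ Λ
  le_hausdorff : ∀ A : Set (Vn n), A ⊆ X → I A ≤ ENNReal.ofReal Λ * HM n d A
  hausdorff_le : ∀ A : Set (Vn n), A ⊆ X → HM n d A ≤ ENNReal.ofReal Λ * I A
  tangentRatio : ∀ x ∈ X, ∀ W : AffineSubspace ℝ (Vn n), x ∈ W →
    Module.finrank ℝ W.direction = d →
    ∀ f : Vn n → Vn n, ContDiff ℝ 1 f → f x = x →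
      (∀ v ∈ W.direction, fderiv ℝ f x v = v) →
      Tendsto (fun r : ℝ =>
          I (f '' ((W : Set (Vn n)) ∩ ball x r)) / I ((W : Set (Vn n)) ∩ ball x r))
        (𝓝[>] 0) (𝓝 1)
  elliptic : ∀ x ∈ X, ∃ R : ℝ, 0 < R ∧ closedBall x R ⊆ X ∧ ∃ ε : ℝ → ℝ,
    (∀ r : ℝ, 0 < r → r ≤ R → 0 ≤ ε r) ∧ Tendsto ε (𝓝[>] 0) (𝓝 0) ∧
    ∀ r : ℝ, 0 < r → r ≤ R → ∀ W : AffineSubspace ℝ (Vn n), x ∈ W →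
      Module.finrank ℝ W.direction = d →
      ∀ S : Set (Vn n), IsCompact S → S ⊆ closedBall x r → HM n d S < ⊤ →
        (¬ ∃ ψ : Vn n → Vn n, (∃ K : ℝ≥0, LipschitzOnWith K ψ (closedBall x r)) ∧
            ψ '' closedBall x r ⊆ closedBall x r ∧
            (∀ y ∈ (W : Set (Vn n)) ∩ sphere x r, ψ y = y) ∧
            ψ '' S ⊆ (W : Set (Vn n)) ∩ sphere x r) →
        I ((W : Set (Vn n)) ∩ ball x r) ≤ I (S ∩ ball x r) + ENNReal.ofReal (ε r * r ^ d)

/-- Admissible energy in `X` (with an unspecified comparability constant). -/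
def AdmissibleEnergy {n : ℕ} (d : ℕ) (X : Set (Vn n)) (I : Measure (Vn n)) : Prop :=
  ∃ Λ : ℝ, AdmissibleEnergyWith d X I Λ

/-- `E` is `H^d`-rectifiable: covered, up to an `H^d`-null set, by countably many Lipschitz
images of subsets of `ℝ^d`. -/
def HdRectifiable (n d : ℕ) (E : Set (Vn n)) : Prop :=
  ∃ (f : ℕ → EuclideanSpace ℝ (Fin d) → Vn n) (A : ℕ → Set (EuclideanSpace ℝ (Fin d))),
    (∀ k, ∃ K : ℝ≥0, LipschitzOnWith K (f k) (A k)) ∧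
    HM n d (E \ ⋃ k, f k '' A k) = 0

/-- Blow-up measures `(2r)^{-d} (H^d ⌞ F)(x + r(· - x))`. -/
def blowup (n d : ℕ) (F : Set (Vn n)) (x : Vn n) (r : ℝ) : Measure (Vn n) :=
  (ENNReal.ofReal (2 * r) ^ d)⁻¹ •
    Measure.map (fun y => x + r⁻¹ • (y - x)) ((HM n d).restrict F)

/-- The linear subspace `W` is the direction of an approximate tangent `d`-plane of `F` at `x`:
the blow-up measures converge weakly to `H^d` restricted to the affine plane `x + W`. -/
def ApproxTangentAt (n d : ℕ) (F : Set (Vn n)) (x : Vn n) (W : Submodule ℝ (Vn n)) : Prop :=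
  Module.finrank ℝ W = d ∧
  ∀ g : Vn n → ℝ, Continuous g → HasCompactSupport g →
    Tendsto (fun r : ℝ => ∫ y, g y ∂(blowup n d F x r)) (𝓝[>] 0)
      (𝓝 (∫ y, g y ∂((HM n d).restrict ((fun v => x + v) '' (W : Set (Vn n))))))

/-- Weak convergence of a sequence of Radon measures, in the open set `X`. -/
def WeakTendstoIn {n : ℕ} (X : Set (Vn n)) (μ : ℕ → Measure (Vn n))
    (ν : Measure (Vn n)) : Prop :=
  ∀ g : Vn n → ℝ, Continuous g → HasCompactSupport g → tsupport g ⊆ X →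
    Tendsto (fun i => ∫ y, g y ∂(μ i)) atTop (𝓝 (∫ y, g y ∂ν))

/-- Orthogonal projection onto a subspace, as a continuous linear map of the ambient space. -/
def projL {n : ℕ} (W : Submodule ℝ (Vn n)) : Vn n →L[ℝ] Vn n :=
  W.subtypeL.comp (W.orthogonalProjection)

/-- `γ` is the Haar probability measure on the Grassmannian of `d`-planes of the subspace `W₀`
(realized as orthogonal projection operators): it is a probability measure carried by the set of
orthogonal projections onto `d`-dimensional subspaces of `W₀`, invariant under the conjugation
action of the orthogonal transformations preserving `W₀`. -/
def IsGrassHaar (n d : ℕ) (W₀ : Submodule ℝ (Vn n))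
    (γ : Measure (Vn n →L[ℝ] Vn n)) : Prop :=
  IsProbabilityMeasure γ ∧
  γ {P | ¬ ∃ W : Submodule ℝ (Vn n), W ≤ W₀ ∧ Module.finrank ℝ W = d ∧ P = projL W} = 0 ∧
  ∀ g : Vn n ≃ₗᵢ[ℝ] Vn n, g '' (W₀ : Set (Vn n)) = (W₀ : Set (Vn n)) →
    Measure.map (fun P => ((g.toContinuousLinearEquiv : Vn n →L[ℝ] Vn n).comp
        (P.comp ((g.symm.toContinuousLinearEquiv : Vn n →L[ℝ] Vn n))))) γ = γ

/-- `𝓘` is induced by a continuous integrand `i : X × G(d,n) → (0,∞)`. -/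
def InducedByContinuousIntegrand {n : ℕ} (d : ℕ) (X : Set (Vn n))
    (I : Measure (Vn n)) : Prop :=
  ∃ i : Vn n × (Vn n →L[ℝ] Vn n) → ℝ,
    ContinuousOn i (X ×ˢ {P | ∃ W : Submodule ℝ (Vn n), Module.finrank ℝ W = d ∧ P = projL W}) ∧
    (∀ p ∈ X ×ˢ {P | ∃ W : Submodule ℝ (Vn n), Module.finrank ℝ W = d ∧ P = projL W},
      0 < i p) ∧
    ∀ F : Set (Vn n), F ⊆ X → MeasurableSet F → HM n d F < ⊤ → HdRectifiable n d F →
      ∀ τ : Vn n → Submodule ℝ (Vn n),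
        (∀ᵐ x ∂((HM n d).restrict F), ApproxTangentAt n d F x (τ x)) →
        I F = ∫⁻ x in F, ENNReal.ofReal (i (x, projL (τ x))) ∂(HM n d)

/-- A Lipschitz neighborhood retract of `X`. -/
def LipNbhdRetract {n : ℕ} (X Γ : Set (Vn n)) : Prop :=
  ∃ O : Set (Vn n), IsOpen O ∧ Γ ⊆ O ∧ O ⊆ X ∧
    ∃ ρ : Vn n → Vn n, (∃ K : ℝ≥0, LipschitzOnWith K ρ O) ∧ ρ '' O ⊆ Γ ∧ ∀ x ∈ Γ, ρ x = x

/-- `Γ` is locally `C¹`-diffeomorphic to a cone. -/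
def LocallyDiffeoToCone {n : ℕ} (X Γ : Set (Vn n)) : Prop :=
  ∀ x ∈ Γ, ∃ R : ℝ, 0 < R ∧ closedBall x R ⊆ X ∧
    ∃ O : Set (Vn n), IsOpen O ∧ x ∈ O ∧
    ∃ φ ψ : Vn n → Vn n,
      ContDiffOn ℝ 1 φ (ball x R) ∧ ContDiffOn ℝ 1 ψ O ∧
      φ '' ball x R = O ∧ (∀ y ∈ ball x R, ψ (φ y) = y) ∧ (∀ z ∈ O, φ (ψ z) = z) ∧
      φ x = x ∧
      ∃ S : Set (Vn n), IsClosed S ∧ (∀ y ∈ S, ∀ t : ℝ, 0 ≤ t → x + t • (y - x) ∈ S) ∧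
        φ '' (Γ ∩ ball x R) = S ∩ O

/-- A dyadic cell of the grid `𝓔_n(k)`. -/
def IsDyadicCell (n k : ℕ) (A : Set (Vn n)) : Prop :=
  ∃ (m : Fin n → ℤ) (α : Fin n → Bool),
    A = {y : Vn n | ∀ i, y i ∈ Set.Icc ((m i : ℝ) * (2:ℝ) ^ (-(k:ℤ)))
        ((m i : ℝ) * (2:ℝ) ^ (-(k:ℤ)) + (if α i then (2:ℝ) ^ (-(k:ℤ)) else 0))}

/-- `φ` is `M`-bilipschitz on `S`. -/
def BilipschitzOnWith {n : ℕ} (M : ℝ) (φ : Vn n → Vn n) (S : Set (Vn n)) : Prop :=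
  ∀ y ∈ S, ∀ z ∈ S, M⁻¹ * dist y z ≤ dist (φ y) (φ z) ∧ dist (φ y) (φ z) ≤ M * dist y z

/-- The grid axiom of Whitney subsets, with constant `M` and scale `t`. -/
def WhitneyGridWith {n : ℕ} (X Γ : Set (Vn n)) (M t : ℝ) : Prop :=
  1 ≤ M ∧ 0 < t ∧
  ∀ x ∈ Γ, ∃ O : Set (Vn n), IsOpen O ∧
    ∃ φ : Vn n → Vn n, BilipschitzOnWith M φ (ball x (scaleRadiusReal X t x)) ∧
      φ '' ball x (scaleRadiusReal X t x) = O ∧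
      ∃ k : ℕ, M⁻¹ * scaleRadiusReal X t x ≤ (2:ℝ) ^ (-(k:ℤ)) ∧
        ∃ S : Set (Set (Vn n)), (∀ A ∈ S, IsDyadicCell n k A) ∧
          φ '' (Γ ∩ ball x (scaleRadiusReal X t x)) = O ∩ ⋃₀ S

/-- A Whitney subset of `X`, with explicit constants `M`, `t`. -/
def WhitneySubsetWith {n : ℕ} (X Γ : Set (Vn n)) (M t : ℝ) : Prop :=
  RelClosedIn X Γ ∧ LipNbhdRetract X Γ ∧ LocallyDiffeoToCone X Γ ∧ WhitneyGridWith X Γ M t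

/-- A Whitney subset of `X`. -/
def WhitneySubset {n : ℕ} (X Γ : Set (Vn n)) : Prop :=
  ∃ M t : ℝ, WhitneySubsetWith X Γ M t

/-! Cells, complexes and charts. -/

/-- The reference cells `∏ [0, α_i]`, `α ∈ {-1,0,1}^n`, of the canonical `n`-complex `E_n`. -/
def refCell (n : ℕ) (α : Fin n → Fin 3) : Set (Vn n) :=
  {y | ∀ i, y i ∈ Set.Icc (min 0 (![(-1:ℝ), 0, 1] (α i))) (max 0 (![(-1:ℝ), 0, 1] (α i)))}

/-- A similarity of `ℝ^n`. -/
def IsSimilarity {n : ℕ} (f : Vn n → Vn n) : Prop :=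
  ∃ r : ℝ, 0 < r ∧ ∀ x y, dist (f x) (f y) = r * dist x y

/-- A cell of `ℝ^n`: a face of a cube, i.e. the image of a reference cell under a similarity. -/
def IsCell (n : ℕ) (A : Set (Vn n)) : Prop :=
  ∃ (f : Vn n → Vn n) (α : Fin n → Fin 3), IsSimilarity f ∧ A = f '' refCell n α

/-- Interior of a cell relative to its affine span. -/
def cellInt {n : ℕ} (A : Set (Vn n)) : Set (Vn n) :=
  {x | x ∈ A ∧ ∃ ε : ℝ, 0 < ε ∧ ∀ y ∈ (affineSpan ℝ A : Set (Vn n)), dist y x < ε → y ∈ A}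

/-- Boundary of a cell relative to its affine span. -/
def cellBry {n : ℕ} (A : Set (Vn n)) : Set (Vn n) := A \ cellInt A

/-- Dimension of a cell: the dimension of its affine span. -/
def cellDim {n : ℕ} (A : Set (Vn n)) : ℕ :=
  Module.finrank ℝ (affineSpan ℝ A).direction

/-- A complex of cells. -/
def IsComplex {n : ℕ} (K : Set (Set (Vn n))) : Prop :=
  (∀ A ∈ K, IsCell n A) ∧
  (∀ A ∈ K, ∀ B ∈ K, A ≠ B → cellInt A ∩ cellInt B = ∅) ∧
  (∀ x ∈ ⋃₀ K, ∃ U : Set (Vn n), IsOpen U ∧ x ∈ U ∧ {A ∈ K | (A ∩ U).Nonempty}.Finite) ∧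
  (∀ A ∈ K, ∃ U : Set (Vn n), IsOpen U ∧ cellInt A ⊆ U ∧
      U ∩ ⋃₀ K ⊆ ⋃ B ∈ {B ∈ K | A ⊆ B}, cellInt B)

/-- The set `V_A = ⋃ {int B | B ∈ K, A ⊆ B}`. -/
def cellNbhd {n : ℕ} (K : Set (Set (Vn n))) (A : Set (Vn n)) : Set (Vn n) :=
  ⋃ B ∈ {B ∈ K | A ⊆ B}, cellInt B

/-- An `n`-chart: the image of the canonical `n`-complex `E_n` under a similarity. -/
def IsChart {n : ℕ} (K : Set (Set (Vn n))) : Prop :=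
  ∃ f : Vn n → Vn n, IsSimilarity f ∧ K = {A | ∃ α : Fin n → Fin 3, A = f '' refCell n α}

/-- A system of `n`-charts. -/
def IsChartSystem {n : ℕ} {ι : Type} (K : ι → Set (Set (Vn n))) : Prop :=
  (∀ a, IsChart (K a)) ∧
  (∀ A ∈ ⋃ a, K a, ∀ B ∈ ⋃ a, K a, (cellInt A ∩ cellInt B).Nonempty →
      cellInt A ⊆ cellInt B ∨ cellInt B ⊆ cellInt A) ∧
  (∀ x ∈ ⋃ a, ⋃₀ (K a), ∃ U : Set (Vn n), IsOpen U ∧ x ∈ U ∧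
      ∃ S : Set (Set (Vn n)), S.Finite ∧ S ⊆ ⋃ a, K a ∧
        ∀ A ∈ ⋃ a, K a, (A ∩ (U ∩ ⋃ a, ⋃₀ (K a))).Nonempty →
          ∃ B ∈ S, cellInt A ⊆ cellInt B)

/-- The limit of a system of `n`-charts: the collection of its maximal cells. -/
def systemLimit {n : ℕ} {ι : Type} (K : ι → Set (Set (Vn n))) : Set (Set (Vn n)) :=
  {A | A ∈ ⋃ a, K a ∧ ∀ B ∈ ⋃ a, K a, (cellInt A ∩ cellInt B).Nonempty → cellInt B ⊆ cellInt A}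

/-- An `n`-complex: the limit of a system of `n`-charts. -/
def IsNComplex {n : ℕ} (K : Set (Set (Vn n))) : Prop :=
  ∃ (ι : Type) (Kα : ι → Set (Set (Vn n))), IsChartSystem Kα ∧ K = systemLimit Kα

/-- A subcomplex of `K`. -/
def IsSubcomplex {n : ℕ} (K L : Set (Set (Vn n))) : Prop :=
  L ⊆ K ∧ ∀ A ∈ L, ∀ B ∈ K, A ⊆ B → B ∈ L

/-- The rigid open set `U(L)` induced by a set of cells. -/
def rigidOpen {n : ℕ} (L : Set (Set (Vn n))) : Set (Vn n) :=
  ⋃ A ∈ L, cellInt A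

/-- `φ` is locally Lipschitz on `S`. -/
def LocallyLipschitzOn {n : ℕ} (S : Set (Vn n)) (φ : Vn n → Vn n) : Prop :=
  ∀ x ∈ S, ∃ U : Set (Vn n), IsOpen U ∧ x ∈ U ∧ ∃ c : ℝ≥0, LipschitzOnWith c φ (U ∩ S)

/-- The union of interiors of cells of dimension `> d`. -/
def highSkel {n : ℕ} (K : Set (Set (Vn n))) (d : ℕ) : Set (Vn n) :=
  ⋃ A ∈ {A ∈ K | d < cellDim A}, cellInt A

/-- Upper Lebesgue integral (infimum of integrals of measurable majorants). -/
def upperLintegral {α : Type*} [MeasurableSpace α] (μ : Measure α) (s : Set α)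
    (f : α → ℝ≥0∞) : ℝ≥0∞ :=
  ⨅ (g : α → ℝ≥0∞) (_ : Measurable g) (_ : ∀ x, f x ≤ g x), ∫⁻ x in s, g x ∂μ

/-- The norm of a linear map restricted to a subset `S`. -/
def opNormOn {n : ℕ} (u : Vn n →L[ℝ] Vn n) (S : Set (Vn n)) : ℝ :=
  sSup ((fun x => ‖u x‖) '' {x ∈ S | ‖x‖ ≤ 1})

end Paper

theorem LipschitzOnWith.dist_apply_self_le {α : Type*} [PseudoMetricSpace α] {K : ℝ≥0}
    {ρ : α → α} {O : Set α} (hρ : LipschitzOnWith K ρ O) {y q : α} (hy : y ∈ O)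
    (hq : q ∈ O) (hρq : ρ q = q) : dist (ρ y) y ≤ (K + 1) * dist y q :=
  calc dist (ρ y) y ≤ dist (ρ y) (ρ q) + dist q y := by
        simpa only [hρq] using dist_triangle (ρ y) (ρ q) y
    _ ≤ K * dist y q + dist y q := by
        rw [dist_comm q y]; exact add_le_add_left (hρ.dist_le_mul y hy q hq) _
    _ = (K + 1) * dist y q := by ring

def ramp (s : ℝ) : ℝ := max 0 (min 1 s)

theorem ramp_mem_Icc (s : ℝ) : ramp s ∈ Icc (0 : ℝ) 1 :=
  ⟨le_max_left _ _, max_le zero_le_one (min_le_left _ _)⟩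

theorem ramp_of_nonpos {s : ℝ} (hs : s ≤ 0) : ramp s = 0 :=
  max_eq_left ((min_le_right _ _).trans hs)

theorem ramp_of_one_le {s : ℝ} (hs : 1 ≤ s) : ramp s = 1 := by
  rw [ramp, min_eq_left hs, max_eq_right zero_le_one]

theorem continuous_ramp : Continuous ramp :=
  continuous_const.max (continuous_const.min continuous_id)

section NormedSpace

open AffineMap

variable {V : Type*} [NormedAddCommGroup V]

structure IsBoundaryCorrection (Γ Q : Set V) (ε r : ℝ) (φ : V → V) : Prop where
  continuous : Continuous φ
  eq_zero_of_mem : ∀ y ∈ Γ, φ y = 0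
  norm_le : ∀ y, ‖φ y‖ ≤ ε
  mem_cthickening : ∀ y, φ y ≠ 0 → y ∈ cthickening ε Q
  add_mem : ∀ y, ∀ q ∈ Q, dist y q ≤ r → y + φ y ∈ Γ

theorem IsBoundaryCorrection.mono {Γ Q : Set V} {ε ε' r : ℝ} {φ : V → V}
    (hφ : IsBoundaryCorrection Γ Q ε r φ) (hε : ε ≤ ε') : IsBoundaryCorrection Γ Q ε' r φ :=
  ⟨hφ.continuous, hφ.eq_zero_of_mem, fun y => (hφ.norm_le y).trans hε,
    fun y hy => cthickening_mono hε Q (hφ.mem_cthickening y hy), hφ.add_mem⟩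

variable [NormedSpace ℝ V]

theorem LipschitzOnWith.exists_isBoundaryCorrection {Γ O Q : Set V} {ρ : V → V}
    {K : ℝ≥0} (hρ : LipschitzOnWith K ρ O) (hO : IsOpen O) (hρΓ : ρ '' O ⊆ Γ)
    (hρid : ∀ y ∈ Γ, ρ y = y) (hQΓ : Q ⊆ Γ) {ε : ℝ} (hε : 0 < ε)
    (hεO : cthickening ε Q ⊆ O) :
    ∃ r, 0 < r ∧ r ≤ ε ∧ ∃ φ, IsBoundaryCorrection Γ Q ε r φ := by
  set r := ε / (2 * (K + 1)) with hr_def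
  have hr : 0 < r := by positivity
  have h2r : 2 * r * (K + 1) = ε := by rw [hr_def]; field_simp
  have h2rε : 2 * r ≤ ε := by nlinarith [K.coe_nonneg]
  have hthick : thickening (2 * r) Q ⊆ O :=
    (thickening_subset_cthickening_of_le h2rε Q).trans hεO
  obtain ⟨χ, hχ0, hχ1, hχ01⟩ := exists_continuous_zero_one_of_isClosed
    (isOpen_thickening (δ := 2 * r) (E := Q)).isClosed_compl isClosed_cthickening
    (disjoint_compl_left_iff_subset.mpr (cthickening_subset_thickening' (by positivity)
      (by linarith) Q))
  have hsupp : ∀ y, χ y ≠ 0 → y ∈ thickening (2 * r) Q := fun y hy => by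
    by_contra h; exact hy (hχ0 h)
  refine ⟨r, hr, by linarith, fun y => χ y • (ρ y - y), ?_, ?_, ?_, ?_, ?_⟩
  · refine ContinuousOn.continuous_of_tsupport_subset
      (χ.continuous.continuousOn.smul (hρ.continuousOn.sub continuousOn_id)) hO ?_
    refine (closure_mono fun y hy => hsupp y (left_ne_zero_of_smul hy)).trans ?_
    exact (closure_thickening_subset_cthickening _ Q).trans
      ((cthickening_mono h2rε Q).trans hεO)
  · intro y hy; simp [hρid y hy]
  · intro y
    by_cases hy : χ y = 0
    · simp [hy, hε.le]
    obtain ⟨q, hq, hyq⟩ := mem_thickening_iff.mp (hsupp y hy)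
    calc ‖χ y • (ρ y - y)‖ ≤ 1 * dist (ρ y) y := by
          rw [norm_smul, Real.norm_eq_abs, abs_of_nonneg (hχ01 y).1, ← dist_eq_norm]
          exact mul_le_mul_of_nonneg_right (hχ01 y).2 dist_nonneg
      _ ≤ (K + 1) * dist y q := by
          rw [one_mul]
          exact hρ.dist_apply_self_le (hthick (hsupp y hy)) (hεO (self_subset_cthickening Q hq))
            (hρid q (hQΓ hq))
      _ ≤ ε := by rw [← h2r]; nlinarith [K.coe_nonneg]
  · intro y hy
    exact thickening_subset_cthickening_of_le h2rε Q (hsupp y (left_ne_zero_of_smul hy))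
  · intro y q hq hyq
    have hy : y ∈ cthickening r Q := mem_cthickening_of_dist_le y q r Q hq hyq
    have hyO : y ∈ O := hεO (cthickening_mono (by linarith) Q hy)
    simpa [hχ1 hy] using hρΓ (mem_image_of_mem ρ hyO)

/-- Over `[0, 1]`: switch the correction `φ` on, move straight from `a` to `b`, switch it off. -/
def correctedPath (φ : V → V) (a b : V) (s : ℝ) : V :=
  lineMap a b (ramp (3 * s - 1)) +
    ramp (min (3 * s) (3 - 3 * s)) • φ (lineMap a b (ramp (3 * s - 1)))

theorem correctedPath_zero (φ : V → V) (a b : V) : correctedPath φ a b 0 = a := by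
  simp [correctedPath, ramp_of_nonpos]

theorem correctedPath_one (φ : V → V) (a b : V) : correctedPath φ a b 1 = b := by
  norm_num [correctedPath, ramp_of_one_le, ramp_of_nonpos]

theorem correctedPath_self (φ : V → V) (a : V) (s : ℝ) :
    correctedPath φ a a s = a + ramp (min (3 * s) (3 - 3 * s)) • φ a := by
  simp [correctedPath]

theorem ContinuousOn.correctedPath {α : Type*} [TopologicalSpace α] {φ : V → V}
    (hφ : Continuous φ) {a b : α → V} {s : α → ℝ} {S : Set α} (ha : ContinuousOn a S)
    (hb : ContinuousOn b S) (hs : ContinuousOn s S) :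
    ContinuousOn (fun p => correctedPath φ (a p) (b p) (s p)) S := by
  have hc : Continuous fun t : ℝ => ramp (3 * t - 1) := by
    have := continuous_ramp; fun_prop
  have hw : Continuous fun t : ℝ => ramp (min (3 * t) (3 - 3 * t)) := by
    have := continuous_ramp; fun_prop
  have hy : ContinuousOn (fun p => (AffineMap.lineMap (a p) (b p) (ramp (3 * s p - 1)) : V)) S :=
    ha.lineMap hb (hc.comp_continuousOn hs)
  exact hy.add ((hw.comp_continuousOn hs).smul (hφ.comp_continuousOn hy))

theorem dist_lineMap_ramp_left_le (a b : V) (t : ℝ) :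
    dist (lineMap a b (ramp t)) a ≤ dist a b := by
  rw [dist_lineMap_left, Real.norm_of_nonneg (ramp_mem_Icc t).1]
  exact mul_le_of_le_one_left dist_nonneg (ramp_mem_Icc t).2

theorem dist_correctedPath_le {φ : V → V} {ε : ℝ} (hφ : ∀ y, ‖φ y‖ ≤ ε) (a b : V) (s : ℝ) :
    dist (correctedPath φ a b s) a ≤ dist a b + ε := by
  set w := ramp (min (3 * s) (3 - 3 * s))
  set y : V := lineMap a b (ramp (3 * s - 1))
  have hφy : ‖w • φ y‖ ≤ ε := by
    rw [norm_smul, Real.norm_of_nonneg (ramp_mem_Icc _).1]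
    exact (mul_le_of_le_one_left (norm_nonneg _) (ramp_mem_Icc _).2).trans (hφ y)
  calc dist (y + w • φ y) a ≤ dist (y + w • φ y) y + dist y a := dist_triangle _ _ _
    _ ≤ dist a b + ε := by
      rw [dist_self_add_left]; linarith [dist_lineMap_ramp_left_le a b (3 * s - 1)]

theorem correctedPath_mem {Γ : Set V} {φ : V → V} (hφΓ : ∀ y ∈ Γ, φ y = 0) {a b : V}
    (ha : a ∈ Γ) (hb : b ∈ Γ) (hφ : ∀ y, dist y a ≤ dist a b → y + φ y ∈ Γ) (s : ℝ) :
    correctedPath φ a b s ∈ Γ := by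
  set y : V := lineMap a b (ramp (3 * s - 1)) with hy_def
  by_cases hy : y ∈ Γ
  · simpa [correctedPath, ← hy_def, hφΓ y hy] using hy
  -- off `Γ` the straight path is in its middle third, where the correction is fully on
  have h1 : 0 < 3 * s - 1 := by
    by_contra! h; exact hy (by simpa [y, ramp_of_nonpos h] using ha)
  have h2 : 3 * s - 1 < 1 := by
    by_contra! h; exact hy (by simpa [y, ramp_of_one_le h] using hb)
  have hw : ramp (min (3 * s) (3 - 3 * s)) = 1 :=
    ramp_of_one_le (le_min (by linarith) (by linarith))
  simpa [correctedPath, ← hy_def, hw] using hφ y (dist_lineMap_ramp_left_le a b _)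

end NormedSpace

namespace Paper

theorem RelClosedIn.subset {n : ℕ} {X E : Set (Vn n)} (hE : RelClosedIn X E) : E ⊆ X := by
  obtain ⟨C, -, rfl⟩ := hE
  exact inter_subset_right

theorem RelClosedIn.isCompact_inter {n : ℕ} {X E K : Set (Vn n)} (hE : RelClosedIn X E)
    (hK : IsCompact K) (hKX : K ⊆ X) : IsCompact (E ∩ K) := by
  obtain ⟨C, hC, rfl⟩ := hE
  rw [inter_right_comm, inter_eq_left.mpr (inter_subset_right.trans hKX)]
  exact hK.inter_left hC

namespace IsSlidingDeformation

variable {n : ℕ} {X Γ E U : Set (Vn n)} {f g : Vn n → Vn n}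

theorem continuousOn (hf : IsSlidingDeformation X Γ E U f) : ContinuousOn f E :=
  let ⟨_, hfL⟩ := hf.lipschitz
  hfL.continuousOn

theorem apply_mem_boundary (hf : IsSlidingDeformation X Γ E U f) {x : Vn n} (hx : x ∈ E ∩ Γ) :
    f x ∈ Γ := by
  obtain ⟨-, -, F, -, -, hF1, -, hFΓ, -⟩ := hf
  exact hF1 x hx.1 ▸ hFΓ 1 (right_mem_Icc.mpr zero_le_one) x hx

theorem apply_mem_open (hf : IsSlidingDeformation X Γ E U f) {x : Vn n} (hx : x ∈ E ∩ U) :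
    f x ∈ U := by
  obtain ⟨-, -, F, -, -, hF1, -, -, hFU, -⟩ := hf
  exact hF1 x hx.1 ▸ hFU 1 (right_mem_Icc.mpr zero_le_one) x hx

theorem exists_isCompact_eq_self (hf : IsSlidingDeformation X Γ E U f) :
    ∃ K, IsCompact K ∧ K ⊆ E ∩ U ∧ ∀ x ∈ E \ K, f x = x := by
  obtain ⟨-, -, F, -, -, hF1, -, -, -, K, hK, hKEU, hFK⟩ := hf
  exact ⟨K, hK, hKEU, fun x hx => hF1 x hx.1 ▸ hFK 1 (right_mem_Icc.mpr zero_le_one) x hx⟩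

theorem trans_homotopy (hf : IsSlidingDeformation X Γ E U f)
    (hg : ∃ K : ℝ≥0, LipschitzOnWith K g E) {H : ℝ × Vn n → Vn n}
    (hH : ContinuousOn H (Icc 0 1 ×ˢ E))
    (hH0 : ∀ x ∈ E, H (0, x) = f x) (hH1 : ∀ x ∈ E, H (1, x) = g x)
    (hHX : ∀ t ∈ Icc (0 : ℝ) 1, ∀ x ∈ E, H (t, x) ∈ X)
    (hHΓ : ∀ t ∈ Icc (0 : ℝ) 1, ∀ x ∈ E ∩ Γ, H (t, x) ∈ Γ)
    (hHU : ∀ t ∈ Icc (0 : ℝ) 1, ∀ x ∈ E ∩ U, H (t, x) ∈ U)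
    {K : Set (Vn n)} (hK : IsCompact K) (hKEU : K ⊆ E ∩ U)
    (hHK : ∀ t ∈ Icc (0 : ℝ) 1, ∀ x ∈ E \ K, H (t, x) = x) :
    IsSlidingDeformation X Γ E U g := by
  have hfc := hf.continuousOn
  obtain ⟨-, -, F, hF, hF0, hF1, hFX, hFΓ, hFU, KF, hKF, hKFEU, hFK⟩ := hf
  have h01 : (1 : ℝ) ∈ Icc (0 : ℝ) 1 := right_mem_Icc.mpr zero_le_one
  -- run `F` on `[0, 1/2]` and `H` on `[1/2, 1]`; the sum form avoids gluing two pieces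
  set G : ℝ × Vn n → Vn n := fun p =>
    F (ramp (2 * p.1), p.2) + (H (ramp (2 * p.1 - 1), p.2) - f p.2)
  have hG : ∀ t, ∀ x ∈ E,
      G (t, x) = F (ramp (2 * t), x) ∨ G (t, x) = H (ramp (2 * t - 1), x) := by
    intro t x hx
    rcases le_total (2 * t) 1 with ht | ht
    · left; simp [G, ramp_of_nonpos (sub_nonpos.mpr ht), hH0 x hx]
    · right; simp [G, ramp_of_one_le ht, hF1 x hx]
  have hGcont : ContinuousOn G (Icc 0 1 ×ˢ E) := by
    have hc : Continuous fun p : ℝ × Vn n => (ramp (2 * p.1), p.2) := by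
      have := continuous_ramp; fun_prop
    have hc' : Continuous fun p : ℝ × Vn n => (ramp (2 * p.1 - 1), p.2) := by
      have := continuous_ramp; fun_prop
    exact (hF.comp hc.continuousOn fun p hp => ⟨ramp_mem_Icc _, hp.2⟩).add
      ((hH.comp hc'.continuousOn fun p hp => ⟨ramp_mem_Icc _, hp.2⟩).sub
        (hfc.comp continuous_snd.continuousOn fun p hp => hp.2))
  refine ⟨hg, fun x hx => hH1 x hx ▸ hHX 1 h01 x hx, G, hGcont, ?_, ?_, ?_, ?_, ?_,
    KF ∪ K, hKF.union hK, union_subset hKFEU hKEU, ?_⟩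
  · intro x hx; simp [G, ramp_of_nonpos, hF0 x hx, hH0 x hx]
  · intro x hx; norm_num [G, ramp_of_one_le, hF1 x hx, hH1 x hx]
  · intro t _ x hx
    rcases hG t x hx with h | h <;> rw [h]
    exacts [hFX _ (ramp_mem_Icc _) x hx, hHX _ (ramp_mem_Icc _) x hx]
  · intro t _ x hx
    rcases hG t x hx.1 with h | h <;> rw [h]
    exacts [hFΓ _ (ramp_mem_Icc _) x hx, hHΓ _ (ramp_mem_Icc _) x hx]
  · intro t _ x hx
    rcases hG t x hx.1 with h | h <;> rw [h]
    exacts [hFU _ (ramp_mem_Icc _) x hx, hHU _ (ramp_mem_Icc _) x hx]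
  · intro t _ x ⟨hx, hxK⟩
    rcases hG t x hx with h | h <;> rw [h]
    exacts [hFK _ (ramp_mem_Icc _) x ⟨hx, fun h => hxK (Or.inl h)⟩,
      hHK _ (ramp_mem_Icc _) x ⟨hx, fun h => hxK (Or.inr h)⟩]

theorem of_correctedPath (hf : IsSlidingDeformation X Γ E U f) (hE : RelClosedIn X E)
    (hUX : U ⊆ X) (hg : ∃ K : ℝ≥0, LipschitzOnWith K g E) (hgΓ : ∀ x ∈ E ∩ Γ, g x ∈ Γ)
    {L : Set (Vn n)} (hL : IsCompact L) (hLEU : L ⊆ E ∩ U)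
    (hfL : ∀ x ∈ E \ L, f x = x) (hgL : ∀ x ∈ E \ L, g x = x)
    {φ : Vn n → Vn n} {ε r : ℝ} (hφ : IsBoundaryCorrection Γ (f '' (Γ ∩ L)) ε r φ)
    (hrε : r ≤ ε) (hfg : ∀ x ∈ L, dist (f x) (g x) ≤ r)
    (hU : cthickening (ε + ε) (f '' L) ⊆ U) :
    IsSlidingDeformation X Γ E U g := by
  have hLE : L ⊆ E := hLEU.trans inter_subset_left
  have hε : 0 ≤ ε := (norm_nonneg _).trans (hφ.norm_le 0)
  have hφL : ∀ y, φ y ≠ 0 → y ∈ cthickening ε (f '' L) := fun y hy =>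
    cthickening_subset_of_subset ε (image_mono inter_subset_right) (hφ.mem_cthickening y hy)
  have hεU : cthickening ε (f '' L) ⊆ U := (cthickening_mono (by linarith) _).trans hU
  set H : ℝ × Vn n → Vn n := fun p => correctedPath φ (f p.2) (g p.2) p.1
  have hstay : ∀ s, ∀ x ∈ E, x ∉ L → φ x = 0 → H (s, x) = x := fun s x hx hxL hφx => by
    simp [H, hfL x ⟨hx, hxL⟩, hgL x ⟨hx, hxL⟩, correctedPath_self, hφx]
  have hmove : ∀ s, ∀ x ∈ E, H (s, x) ∈ U ∨ H (s, x) = x := by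
    intro s x hx
    by_cases hxL : x ∈ L
    · refine Or.inl (hU (mem_cthickening_of_dist_le _ (f x) _ _ (mem_image_of_mem f hxL) ?_))
      linarith [dist_correctedPath_le hφ.norm_le (f x) (g x) s, hfg x hxL]
    by_cases hφx : φ x = 0
    · exact Or.inr (hstay s x hx hxL hφx)
    have hHx : dist (H (s, x)) x ≤ ε := by
      simpa [H, hfL x ⟨hx, hxL⟩, hgL x ⟨hx, hxL⟩] using dist_correctedPath_le hφ.norm_le x x s
    exact Or.inl (hU (cthickening_cthickening_subset hε hε _
      (mem_cthickening_of_dist_le _ x ε _ (hφL x hφx) hHx)))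
  have hK : IsCompact (E ∩ cthickening ε (f '' L)) :=
    hE.isCompact_inter (hL.image_of_continuousOn (hf.continuousOn.mono hLE)).cthickening
      (hεU.trans hUX)
  obtain ⟨Kg, hgK⟩ := hg
  refine hf.trans_homotopy ⟨Kg, hgK⟩ (H := H) ?_ (fun x _ => correctedPath_zero φ _ _)
    (fun x _ => correctedPath_one φ _ _) ?_ ?_ ?_ (hL.union hK)
    (union_subset hLEU fun y hy => ⟨hy.1, hεU hy.2⟩) ?_
  · exact ContinuousOn.correctedPath hφ.continuous
      (hf.continuousOn.comp continuous_snd.continuousOn fun p hp => hp.2)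
      (hgK.continuousOn.comp continuous_snd.continuousOn fun p hp => hp.2)
      continuous_fst.continuousOn
  · exact fun t _ x hx => (hmove t x hx).elim (fun h => hUX h) fun h => h.symm ▸ hE.subset hx
  · intro t _ x hx
    by_cases hxL : x ∈ L
    · exact correctedPath_mem hφ.eq_zero_of_mem (hf.apply_mem_boundary hx) (hgΓ x hx)
        (fun y hy => hφ.add_mem y (f x) ⟨x, ⟨hx.2, hxL⟩, rfl⟩ (hy.trans (hfg x hxL))) t
    · exact (hstay t x hx.1 hxL (hφ.eq_zero_of_mem x hx.2)).symm ▸ hx.2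
  · exact fun t _ x hx => (hmove t x hx.1).elim id fun h => h.symm ▸ hx.2
  · intro t _ x hx
    refine hstay t x hx.1 (fun h => hx.2 (Or.inl h)) ?_
    by_contra hφx
    exact hx.2 (Or.inr ⟨hx.1, hφL x hφx⟩)

end IsSlidingDeformation

theorem LipNbhdRetract.exists_isBoundaryCorrection {n : ℕ} {X Γ Q : Set (Vn n)}
    (hΓ : LipNbhdRetract X Γ) (hQ : IsCompact Q) (hQΓ : Q ⊆ Γ) {ε : ℝ} (hε : 0 < ε) :
    ∃ r, 0 < r ∧ r ≤ ε ∧ ∃ φ, IsBoundaryCorrection Γ Q ε r φ := by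
  obtain ⟨O, hO, hΓO, -, ρ, ⟨K, hρ⟩, hρΓ, hρid⟩ := hΓ
  obtain ⟨δ, hδ, hδO⟩ := hQ.exists_cthickening_subset_open hO (hQΓ.trans hΓO)
  obtain ⟨r, hr, hrε, φ, hφ⟩ := hρ.exists_isBoundaryCorrection hO hρΓ hρid hQΓ (lt_min hε hδ)
    ((cthickening_mono (min_le_right _ _) Q).trans hδO)
  exact ⟨r, hr, hrε.trans (min_le_left _ _), φ, hφ.mono (min_le_left _ _)⟩

theorem sliding_deformation_stability_general (n : ℕ) (X : Set (Vn n))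
    (Γ : Set (Vn n)) (hΓc : RelClosedIn X Γ) (hΓ : LipNbhdRetract X Γ)
    (E : Set (Vn n)) (hE : RelClosedIn X E)
    (U : Set (Vn n)) (hU : IsOpen U) (hUX : U ⊆ X)
    (f : Vn n → Vn n) (hf : IsSlidingDeformation X Γ E U f)
    (W : Set (Vn n))
    (hWcc : ∃ K : Set (Vn n), IsCompact K ∧ W ⊆ K ∧ K ⊆ E ∩ U) :
    ∃ δ : ℝ, 0 < δ ∧
      ∀ g : Vn n → Vn n, (∃ K : ℝ≥0, LipschitzOnWith K g E) →
        (∀ x ∈ E, dist (g x) (f x) ≤ δ) →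
        (∀ x ∈ E ∩ Γ, g x ∈ Γ) →
        (∀ x ∈ E \ W, g x = x) →
        IsSlidingDeformation X Γ E U g := by
  obtain ⟨KW, hKW, hWKW, hKWEU⟩ := hWcc
  obtain ⟨KF, hKF, hKFEU, hfKF⟩ := hf.exists_isCompact_eq_self
  set L := KF ∪ KW
  have hL : IsCompact L := hKF.union hKW
  have hLEU : L ⊆ E ∩ U := union_subset hKFEU hKWEU
  have hLE : L ⊆ E := hLEU.trans inter_subset_left
  have hfL : IsCompact (f '' L) := hL.image_of_continuousOn (hf.continuousOn.mono hLE)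
  obtain ⟨ε, hε, hεU⟩ := hfL.exists_cthickening_subset_open hU
    (image_subset_iff.mpr fun x hx => hf.apply_mem_open (hLEU hx))
  have hΓL : IsCompact (Γ ∩ L) := hΓc.isCompact_inter hL fun x hx => hUX (hLEU hx).2
  obtain ⟨r, hr, hrε, φ, hφ⟩ := hΓ.exists_isBoundaryCorrection
    (hΓL.image_of_continuousOn (hf.continuousOn.mono (inter_subset_right.trans hLE)))
    (image_subset_iff.mpr fun x hx => hf.apply_mem_boundary ⟨hLE hx.2, hx.1⟩) (half_pos hε)
  refine ⟨r, hr, fun g hg hgf hgΓ hgW => hf.of_correctedPath hE hUX hg hgΓ hL hLEU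
    (fun x hx => hfKF x ⟨hx.1, fun h => hx.2 (Or.inl h)⟩)
    (fun x hx => hgW x ⟨hx.1, fun h => hx.2 (Or.inr (hWKW h))⟩) hφ hrε
    (fun x hx => dist_comm (f x) (g x) ▸ hgf x (hLE hx)) ?_⟩
  rwa [add_halves]

/-- **Stability of sliding deformations under small perturbations.** -/
theorem sliding_deformation_stability (n : ℕ) (X : Set (Vn n)) (hX : IsOpen X)
    (Γ : Set (Vn n)) (hΓc : RelClosedIn X Γ) (hΓ : LipNbhdRetract X Γ)
    (E : Set (Vn n)) (hE : RelClosedIn X E)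
    (U : Set (Vn n)) (hU : IsOpen U) (hUX : U ⊆ X)
    (f : Vn n → Vn n) (hf : IsSlidingDeformation X Γ E U f)
    (W : Set (Vn n)) (hWopen : ∃ W₀ : Set (Vn n), IsOpen W₀ ∧ W = W₀ ∩ E)
    (hWcc : ∃ K : Set (Vn n), IsCompact K ∧ W ⊆ K ∧ K ⊆ E ∩ U) :
    ∃ δ : ℝ, 0 < δ ∧
      ∀ g : Vn n → Vn n, (∃ K : ℝ≥0, LipschitzOnWith K g E) →
        (∀ x ∈ E, dist (g x) (f x) ≤ δ) →
        (∀ x ∈ E ∩ Γ, g x ∈ Γ) →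
        (∀ x ∈ E \ W, g x = x) →
        IsSlidingDeformation X Γ E U g :=
  sliding_deformation_stability_general n X Γ hΓc hΓ E hE U hU hUX f hf W hWcc

end Paper
end
end

section
/- Grassmannian distance via restricted norms. Let 0 ≤ d ≤ n and let V, W ∈ G(d,n), the set of d-dimensional linear subspaces of ℝ^n. With ‖u‖_S := sup{|u(x)| : x ∈ S, |x| ≤ 1} for a subspace S of ℝ^n and a linear map u : ℝ^n → ℝ^n, the distance d(V,W) = ‖p_V − p_W‖ (operator norm of the difference of orthogonal projections) satisfies: d(V,W) = max{‖p_V − p_W‖_V, ‖p_V − p_W‖_{V^⊥}} = max{‖p_V − p_W‖_V, ‖p_V − p_W‖_W}. -/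
open MeasureTheory Metric Set Filter
open scoped ENNReal NNReal Topology BigOperators

noncomputable section

/-!
On `V` the map `p_V - p_W` agrees with `p_{Wᗮ}` and on `Vᗮ` with `-p_W`, so it sends `V` and `Vᗮ`
into the orthogonal subspaces `Wᗮ` and `W`; Pythagoras in the source and in the target gives the
first identity. Restricted to `Vᗮ` and to `W` the map has the norms of `p_W p_{Vᗮ}` and of
`p_{Vᗮ} p_W`, which are adjoint to each other.
-/

namespace ContinuousLinearMap

theorem norm_comp_subtypeL_le {𝕜 E F : Type*} [NontriviallyNormedField 𝕜] [NormedAddCommGroup E]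
    [NormedSpace 𝕜 E] [NormedAddCommGroup F] [NormedSpace 𝕜 F] (T : E →L[𝕜] F)
    (K : Submodule 𝕜 E) : ‖T ∘L K.subtypeL‖ ≤ ‖T‖ :=
  (opNorm_comp_le T _).trans (mul_le_of_le_one_right (norm_nonneg T) K.norm_subtypeL_le)

variable {𝕜 E F : Type*} [RCLike 𝕜] [NormedAddCommGroup E] [InnerProductSpace 𝕜 E]
  [NormedAddCommGroup F] [InnerProductSpace 𝕜 F]

theorem norm_comp_subtypeL_eq_norm_comp_starProjection (T : E →L[𝕜] F) (K : Submodule 𝕜 E)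
    [K.HasOrthogonalProjection] : ‖T ∘L K.subtypeL‖ = ‖T ∘L K.starProjection‖ := by
  have hsub : T ∘L K.subtypeL = (T ∘L K.starProjection) ∘L K.subtypeL := by
    ext x
    simp [K.starProjection_eq_self_iff.mpr x.2]
  refine le_antisymm (hsub ▸ norm_comp_subtypeL_le _ K) ?_
  calc ‖T ∘L K.starProjection‖ = ‖(T ∘L K.subtypeL) ∘L K.orthogonalProjectionOnto‖ := rfl
    _ ≤ ‖T ∘L K.subtypeL‖ :=
      (opNorm_comp_le _ _).trans
        (mul_le_of_le_one_right (norm_nonneg _) K.orthogonalProjectionOnto_norm_le)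

theorem norm_eq_max_norm_comp_subtypeL_of_isOrtho_map (T : E →L[𝕜] F) (K : Submodule 𝕜 E)
    [K.HasOrthogonalProjection] (hT : K.map (T : E →ₗ[𝕜] F) ⟂ Kᗮ.map (T : E →ₗ[𝕜] F)) :
    ‖T‖ = max ‖T ∘L K.subtypeL‖ ‖T ∘L Kᗮ.subtypeL‖ := by
  refine le_antisymm ?_ (max_le (T.norm_comp_subtypeL_le K) (T.norm_comp_subtypeL_le Kᗮ))
  set M := max ‖T ∘L K.subtypeL‖ ‖T ∘L Kᗮ.subtypeL‖
  have hM : 0 ≤ M := le_max_of_le_left (norm_nonneg _)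
  refine opNorm_le_bound T hM fun x => ?_
  obtain ⟨a, ha, b, hb, rfl⟩ : ∃ a ∈ K, ∃ b ∈ Kᗮ, a + b = x :=
    ⟨_, K.starProjection_apply_mem x, _, K.sub_starProjection_mem_orthogonal x, add_sub_cancel _ _⟩
  have hTa : ‖T a‖ ≤ M * ‖a‖ :=
    ((T ∘L K.subtypeL).le_opNorm ⟨a, ha⟩).trans
      (mul_le_mul_of_nonneg_right (le_max_left _ _) (norm_nonneg a))
  have hTb : ‖T b‖ ≤ M * ‖b‖ :=
    ((T ∘L Kᗮ.subtypeL).le_opNorm ⟨b, hb⟩).trans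
      (mul_le_mul_of_nonneg_right (le_max_right _ _) (norm_nonneg b))
  have hx := norm_add_sq_eq_norm_sq_add_norm_sq_of_inner_eq_zero a b
    (K.inner_right_of_mem_orthogonal ha hb)
  have hTx := norm_add_sq_eq_norm_sq_add_norm_sq_of_inner_eq_zero (T a) (T b)
    (Submodule.isOrtho_iff_inner_eq.mp hT _ (K.mem_map_of_mem ha) _ (Kᗮ.mem_map_of_mem hb))
  rw [← map_add] at hTx
  refine (mul_self_le_mul_self_iff (norm_nonneg _) (by positivity)).2 ?_
  calc ‖T (a + b)‖ * ‖T (a + b)‖ = ‖T a‖ * ‖T a‖ + ‖T b‖ * ‖T b‖ := hTx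
    _ ≤ (M * ‖a‖) * (M * ‖a‖) + (M * ‖b‖) * (M * ‖b‖) :=
      add_le_add (mul_self_le_mul_self (norm_nonneg _) hTa)
        (mul_self_le_mul_self (norm_nonneg _) hTb)
    _ = (M * ‖a + b‖) * (M * ‖a + b‖) := by linear_combination (-(M * M)) * hx

end ContinuousLinearMap

namespace Submodule

variable {𝕜 E : Type*} [RCLike 𝕜] [NormedAddCommGroup E] [InnerProductSpace 𝕜 E]
  (K L : Submodule 𝕜 E) [K.HasOrthogonalProjection] [L.HasOrthogonalProjection]

theorem isOrtho_map_starProjection_sub :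
    K.map (K.starProjection - L.starProjection : E →ₗ[𝕜] E) ⟂
      Kᗮ.map (K.starProjection - L.starProjection : E →ₗ[𝕜] E) := by
  refine (isOrtho_orthogonal_left L).mono ?_ ?_
  · rintro _ ⟨a, ha, rfl⟩
    simp [starProjection_eq_self_iff.mpr ha]
  · rintro _ ⟨b, hb, rfl⟩
    simp [(starProjection_apply_eq_zero_iff (K := K)).mpr hb]

theorem norm_starProjection_sub_comp_subtypeL_orthogonal [CompleteSpace E] :
    ‖(K.starProjection - L.starProjection) ∘L Kᗮ.subtypeL‖ =
      ‖(K.starProjection - L.starProjection) ∘L L.subtypeL‖ := by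
  simp only [ContinuousLinearMap.norm_comp_subtypeL_eq_norm_comp_starProjection,
    starProjection_orthogonal', ← ContinuousLinearMap.mul_def]
  set p := K.starProjection
  set q := L.starProjection
  have hp : p * p = p := K.isIdempotentElem_starProjection
  have hq : q * q = q := L.isIdempotentElem_starProjection
  have hleft : (p - q) * (1 - p) = -(q * (1 - p)) := by
    rw [mul_sub, mul_sub, mul_one, mul_one, sub_mul, hp]
    abel
  have hright : (p - q) * q = -((1 - p) * q) := by
    rw [sub_mul, sub_mul, one_mul, hq]
    abel
  calc ‖(p - q) * (1 - p)‖ = ‖q * (1 - p)‖ := by rw [hleft, norm_neg]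
    _ = ‖star (q * (1 - p))‖ := (norm_star _).symm
    _ = ‖(1 - p) * q‖ := by
        rw [star_mul, star_sub, star_one, (isSelfAdjoint_starProjection K).star_eq,
          (isSelfAdjoint_starProjection L).star_eq]
    _ = ‖(p - q) * q‖ := by rw [hright, norm_neg]

end Submodule

namespace Paper

theorem opNormOn_eq_norm_comp_subtypeL {n : ℕ} (u : Vn n →L[ℝ] Vn n) (S : Submodule ℝ (Vn n)) :
    opNormOn u S = ‖u ∘L S.subtypeL‖ := by
  have hball : {x ∈ (S : Set (Vn n)) | ‖x‖ ≤ 1} = (↑) '' closedBall (0 : S) 1 := by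
    ext x
    simp [and_comm]
  rw [← ContinuousLinearMap.sSup_unitClosedBall_eq_norm, opNormOn, hball, image_image]
  rfl

theorem grassmannian_dist_restricted_general (n : ℕ)
    (V W : Submodule ℝ (Vn n)) :
    ‖projL V - projL W‖ =
      max (opNormOn (projL V - projL W) (V : Set (Vn n)))
          (opNormOn (projL V - projL W) (Vᗮ : Set (Vn n))) ∧
    ‖projL V - projL W‖ =
      max (opNormOn (projL V - projL W) (V : Set (Vn n)))
          (opNormOn (projL V - projL W) (W : Set (Vn n))) := by
  have hprojL : ∀ U : Submodule ℝ (Vn n), projL U = U.starProjection := fun _ => rfl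
  simp only [opNormOn_eq_norm_comp_subtypeL, hprojL]
  have hV := (V.starProjection - W.starProjection).norm_eq_max_norm_comp_subtypeL_of_isOrtho_map V
    (V.isOrtho_map_starProjection_sub W)
  exact ⟨hV, by rw [hV, V.norm_starProjection_sub_comp_subtypeL_orthogonal W]⟩

/-- **Grassmannian distance via restricted norms.** -/
theorem grassmannian_dist_restricted (n d : ℕ) (hdn : d ≤ n)
    (V W : Submodule ℝ (Vn n))
    (hV : Module.finrank ℝ V = d) (hW : Module.finrank ℝ W = d) :
    ‖projL V - projL W‖ =
      max (opNormOn (projL V - projL W) (V : Set (Vn n)))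
          (opNormOn (projL V - projL W) (Vᗮ : Set (Vn n))) ∧
    ‖projL V - projL W‖ =
      max (opNormOn (projL V - projL W) (V : Set (Vn n)))
          (opNormOn (projL V - projL W) (W : Set (Vn n))) :=
  grassmannian_dist_restricted_general n V W

end Paper
end
end
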